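/- arXiv:1909.07114 — 2 statements merged into one kernel-verified Lean document; each statement's English description precedes it below -/
import Mathlib

section
/- Fix e ≥ 3 and let λ be a partition of 5e with empty e-core of one of the forms ⟨i_{3,2}⟩ (1 ≤ i ≤ e−1), ⟨i_{2^2}, j⟩ (1 ≤ i ≤ j−1, j ≤ e−1), or ⟨j, i_{2^2}⟩ (0 ≤ j ≤ i−2, i ≤ e−1). Then in the abacus display of λ with 5e beads, runner i is the unique index k ∈ {1,…,e−1} whose reduced k-signature contains at least two − signs; moreover, in the display of λ with 5e+1 beads the reduced 1-signature contains at most one − sign. -/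
/-- A partition, recorded by its (1-indexed) sequence of parts: weakly decreasing from
index `1` on, eventually zero, with the unused index `0` set to `0`. -/
structure Ptn where
  parts : ℕ → ℕ
  zero_at_zero : parts 0 = 0
  antitone : ∀ ⦃i j : ℕ⦄, 1 ≤ i → i ≤ j → parts j ≤ parts i
  eventually_zero : ∃ N : ℕ, ∀ i : ℕ, N ≤ i → parts i = 0

namespace Ptn

/-- The number of (nonzero) parts. -/
noncomputable def numParts (l : Ptn) : ℕ :=
  sInf {N : ℕ | ∀ i : ℕ, N < i → l.parts i = 0}

/-- The size `|λ|`, i.e. the integer that `λ` is a partition of. -/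
noncomputable def size (l : Ptn) : ℕ :=
  ∑ i ∈ Finset.Icc 1 l.numParts, l.parts i

/-- The β-set `B_r(λ) = {λ_i + r - i : 1 ≤ i ≤ r}` of `λ` with `r` beads. -/
def betaSet (l : Ptn) (r : ℕ) : Finset ℕ :=
  (Finset.Icc 1 r).image fun i => l.parts i + r - i

end Ptn

/-- The β-set of the `e`-core: push all beads on each runner as high as possible. -/
def coreBeta (e : ℕ) (B : Finset ℕ) : Finset ℕ :=
  (Finset.range e).biUnion fun k =>
    (Finset.range ((B.filter fun x => x % e = k).card)).image fun j => j * e + k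

/-- The `e`-weight of the abacus display `B`. -/
def eWeight (e : ℕ) (B : Finset ℕ) : ℕ :=
  ((∑ b ∈ B, b) - ∑ b ∈ coreBeta e B, b) / e

/-- Two partitions have the same `e`-core. -/
def SameCore (e : ℕ) (l m : Ptn) : Prop :=
  ∀ r : ℕ, l.numParts ≤ r → m.numParts ≤ r →
    coreBeta e (l.betaSet r) = coreBeta e (m.betaSet r)

/-- `λ` is `e`-regular: it has no `e` equal nonzero parts. -/
def Regular (e : ℕ) (l : Ptn) : Prop :=
  ∀ i : ℕ, 1 ≤ i → l.parts i ≠ 0 → l.parts (i + e - 1) < l.parts i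

/-- The sign (if any) contributed by row `x` to the `k`-signature of the display `B`:
`some false` is a `−` (bead on runner `k`, none on runner `k-1`),
`some true` is a `+` (bead on runner `k-1`, none on runner `k`). -/
def signAt (e k : ℕ) (B : Finset ℕ) (x : ℕ) : Option Bool :=
  if x * e + k ∈ B ∧ x * e + (k - 1) ∉ B then some false
  else if x * e + (k - 1) ∈ B ∧ x * e + k ∉ B then some true
  else none

/-- The `k`-signature of the display `B`, reading rows from top to bottom. -/
def signature (e k : ℕ) (B : Finset ℕ) : List Bool :=
  (List.range (B.sup id / e + 1)).filterMap (signAt e k B)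

/-- Successively delete adjacent `−+` pairs until none remain. -/
def reduceSig : List Bool → List Bool
  | [] => []
  | s :: rest =>
    match reduceSig rest with
    | [] => [s]
    | t :: rest' => if s = false ∧ t = true then rest' else s :: t :: rest'

/-- The number of `−` signs in the reduced `k`-signature of `B`,
i.e. the number of normal beads on runner `k`. -/
def normalCount (e k : ℕ) (B : Finset ℕ) : ℕ :=
  (reduceSig (signature e k B)).count false

/-- The abacus display with `e` runners whose beads on runner `k` sit in the rows `rows k`. -/
def runnerBeta (e : ℕ) (rows : ℕ → Finset ℕ) : Finset ℕ :=
  (Finset.range e).biUnion fun k => (rows k).image fun y => y * e + k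

/-- Rows of a 5-bead runner carrying the empty partition. -/
def rowsEmpty : Finset ℕ := {0, 1, 2, 3, 4}
/-- Rows of a 5-bead runner carrying the partition `(3,2)`. -/
def rows32 : Finset ℕ := {0, 1, 2, 5, 7}
/-- Rows of a 5-bead runner carrying the partition `(2,2)`. -/
def rows22 : Finset ℕ := {0, 1, 2, 5, 6}
/-- Rows of a 5-bead runner carrying the partition `(1)`. -/
def rows1 : Finset ℕ := {0, 1, 2, 3, 5}
/-- Rows of a 5-bead runner carrying the partition `(5)`. -/
def rows5 : Finset ℕ := {0, 1, 2, 3, 9}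
/-- Rows of a 5-bead runner carrying the partition `(4)`. -/
def rows4 : Finset ℕ := {0, 1, 2, 3, 8}

/-- The β-set (with `5e` beads) of `⟨i_{3,2}⟩`. -/
def shape32 (e i : ℕ) : Finset ℕ :=
  runnerBeta e fun k => if k = i then rows32 else rowsEmpty

/-- The β-set (with `5e` beads) of `⟨i_{2²}, j⟩`. -/
def shapeA (e i j : ℕ) : Finset ℕ :=
  runnerBeta e fun k => if k = i then rows22 else if k = j then rows1 else rowsEmpty

/-- The β-set (with `5e` beads) of `⟨j, i_{2²}⟩`. -/
def shapeB (e j i : ℕ) : Finset ℕ :=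
  runnerBeta e fun k => if k = j then rows1 else if k = i then rows22 else rowsEmpty

/-- The β-set (with `5e` beads) of `⟨i_5⟩`. -/
def shape5 (e i : ℕ) : Finset ℕ :=
  runnerBeta e fun k => if k = i then rows5 else rowsEmpty

/-- The β-set (with `5e` beads) of `⟨i_4, i+1⟩`. -/
def shape41 (e i : ℕ) : Finset ℕ :=
  runnerBeta e fun k => if k = i then rows4 else if k = i + 1 then rows1 else rowsEmpty

/-- The β-set (with `5e` beads) of `⟨0, i_4⟩`. -/
def shape04 (e i : ℕ) : Finset ℕ :=
  runnerBeta e fun k => if k = 0 then rows1 else if k = i then rows4 else rowsEmpty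

/-- The `e`-weight of the bead at position `a` of the display `B`. -/
def beadWt (e : ℕ) (B : Finset ℕ) (a : ℕ) : ℕ :=
  ((Finset.Icc 1 (a / e)).filter fun j => a - j * e ∉ B).card

/-- The induced `e`-sequence of the display `B`, as a multiset:
each bead of positive weight `w` at position `a` contributes `a, a-e, …, a-(w-1)e`. -/
def indSeq (e : ℕ) (B : Finset ℕ) : Multiset ℕ :=
  B.val.bind fun a => (Multiset.range (beadWt e B a)).map fun u => a - u * e

/-- The product order `λ ≤_P μ`. -/
def ProdLE (e : ℕ) (l m : Ptn) : Prop :=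
  l.size = m.size ∧ SameCore e l m ∧
  (∀ r : ℕ, l.numParts ≤ r → m.numParts ≤ r →
    eWeight e (l.betaSet r) = eWeight e (m.betaSet r)) ∧
  ∃ N₀ : ℕ, ∀ N : ℕ, N₀ ≤ N → l.numParts ≤ N → m.numParts ≤ N →
    List.Forall₂ (· ≤ ·) (Multiset.sort (indSeq e (l.betaSet N)) (· ≤ ·))
      (Multiset.sort (indSeq e (m.betaSet N)) (· ≤ ·))

/-- The dominance order `λ ⊴ μ`. -/
def Dom (l m : Ptn) : Prop :=
  ∀ t : ℕ, ∑ i ∈ Finset.Icc 1 t, l.parts i ≤ ∑ i ∈ Finset.Icc 1 t, m.parts i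

/-- `λ →^σ τ` on displays with `k` beads. -/
def JStep (e k : ℕ) (l τ : Ptn) : Prop :=
  l.numParts ≤ k ∧ τ.numParts ≤ k ∧
  ∃ (σ : Finset ℕ) (a b i : ℕ), 1 ≤ i ∧ a < b ∧
    a ∈ l.betaSet k ∧ i * e ≤ a ∧ a - i * e ∉ l.betaSet k ∧
    σ = insert (a - i * e) ((l.betaSet k).erase a) ∧
    i * e ≤ b ∧ b - i * e ∈ σ ∧ b ∉ σ ∧
    τ.betaSet k = insert b (σ.erase (b - i * e))

/-- `λ → τ`: `λ →^σ τ` for some `σ` (on some common number of beads). -/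
def JRel (e : ℕ) (l τ : Ptn) : Prop := ∃ k : ℕ, JStep e k l τ

/-- The Jantzen order `≤_J`: reflexive-transitive closure of `→`. -/
def JLE (e : ℕ) : Ptn → Ptn → Prop := Relation.ReflTransGen (JRel e)

/-- One upward bead move on a β-set. -/
def Step (e : ℕ) (B B' : Finset ℕ) : Prop :=
  ∃ b ∈ B, e ≤ b ∧ b - e ∉ B ∧ B' = insert (b - e) (B.erase b)

/-- No upward bead move is possible. -/
def Terminal (e : ℕ) (B : Finset ℕ) : Prop := ∀ b ∈ B, e ≤ b → b - e ∈ B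

/-- `B` is the β-set of `μ` with `r` beads. -/
def IsBetaOf (B : Finset ℕ) (r : ℕ) (μ : Ptn) : Prop :=
  μ.numParts ≤ r ∧ μ.betaSet r = B

/-- The number of beads of the display `B` on runner `i`. -/
def cnt (e : ℕ) (B : Finset ℕ) (i : ℕ) : ℕ := (B.filter fun x => x % e = i).card

/-- The set of rows of the display `B` occupied by beads on runner `i`. -/
def rowsOf (e : ℕ) (B : Finset ℕ) (i : ℕ) : Finset ℕ :=
  (B.filter fun x => x % e = i).image fun x => x / e

/-- `ν²`: the partition obtained by removing the first part. -/
def Ptn.tail (l : Ptn) : Ptn where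
  parts := fun i => if i = 0 then 0 else l.parts (i + 1)
  zero_at_zero := rfl
  antitone := by
    intro i j hi hij
    try dsimp only
    rw [if_neg (by omega : i ≠ 0), if_neg (by omega : j ≠ 0)]
    exact l.antitone (by omega) (by omega)
  eventually_zero := by
    obtain ⟨N, hN⟩ := l.eventually_zero
    refine ⟨N + 1, fun i hi => ?_⟩
    try dsimp only
    rw [if_neg (by omega : i ≠ 0)]
    exact hN _ (by omega)

/-
Only runners `k` and `k - 1` enter the `k`-signature, so on a display given runner by runner
the number of normal beads on runner `k` is a function of the sets of occupied rows on these
two runners. In the three shapes every runner other than `i` carries `∅` or `(1)`, runner `i`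
carries `(2,2)` or `(3,2)` and runner `i - 1` carries `∅`, so only finitely many pairs of adjacent
runners occur, each settled by direct computation. Adding a bead shifts every runner one step to
the right and moves runner `e - 1`, with an extra bead on top, to runner `0`; so the `1`-signature
with `5e + 1` beads compares runner `0` with the shifted runner `e - 1`.
-/

def rowSign (R R' : Finset ℕ) (x : ℕ) : Option Bool :=
  if x ∈ R ∧ x ∉ R' then some false
  else if x ∈ R' ∧ x ∉ R then some true
  else none

def rowsNormalCount (N : ℕ) (R R' : Finset ℕ) : ℕ :=
  (reduceSig ((List.range N).filterMap (rowSign R R'))).count false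

def addBead (B : Finset ℕ) : Finset ℕ := insert 0 (B.image (· + 1))

lemma List.filterMap_range_of_eq_none {α : Type*} {f : ℕ → Option α} {M N : ℕ} (hMN : M ≤ N)
    (hf : ∀ x, M ≤ x → f x = none) :
    (List.range N).filterMap f = (List.range M).filterMap f := by
  obtain ⟨d, rfl⟩ := Nat.exists_eq_add_of_le hMN
  suffices h : ((List.range d).map (M + ·)).filterMap f = [] by
    rw [List.range_add, List.filterMap_append, h, List.append_nil]
  refine List.filterMap_eq_nil_iff.mpr fun x hx => ?_
  obtain ⟨t, -, rfl⟩ := List.mem_map.mp hx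
  exact hf _ (Nat.le_add_right _ _)

lemma signature_eq_filterMap_range {e k N : ℕ} (he : 0 < e) {B : Finset ℕ}
    (hB : ∀ b ∈ B, b < N * e) :
    signature e k B = (List.range N).filterMap (signAt e k B) := by
  set M := B.sup id / e + 1
  have hrow : ∀ x c, min M N ≤ x → x * e + c ∉ B := fun x c hx hc => by
    rcases min_le_iff.mp hx with hMx | hNx
    · have h1 : x * e + c ≤ B.sup id := Finset.le_sup (f := id) hc
      have h2 : B.sup id < M * e := Nat.lt_mul_of_div_lt (Nat.lt_succ_self _) he
      nlinarith
    · have := hB _ hc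
      nlinarith
  have hnone : ∀ x, min M N ≤ x → signAt e k B x = none := fun x hx => by
    simp [signAt, hrow x k hx, hrow x (k - 1) hx]
  rw [signature, List.filterMap_range_of_eq_none (min_le_left M N) hnone,
    List.filterMap_range_of_eq_none (min_le_right M N) hnone]

lemma mem_runnerBeta {e : ℕ} {rows : ℕ → Finset ℕ} {m : ℕ} :
    m ∈ runnerBeta e rows ↔ ∃ k < e, ∃ y ∈ rows k, y * e + k = m := by
  simp only [runnerBeta, Finset.mem_biUnion, Finset.mem_image, Finset.mem_range]

lemma mul_add_mem_runnerBeta_iff {e k : ℕ} {rows : ℕ → Finset ℕ} (hk : k < e) (x : ℕ) :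
    x * e + k ∈ runnerBeta e rows ↔ x ∈ rows k := by
  refine mem_runnerBeta.trans ⟨?_, fun hx => ⟨k, hk, x, hx, rfl⟩⟩
  rintro ⟨k', hk', y, hy, h⟩
  have he : 0 < e := by omega
  have hmod : (y * e + k') % e = (x * e + k) % e := by rw [h]
  have hdiv : (y * e + k') / e = (x * e + k) / e := by rw [h]
  rw [Nat.mul_add_mod_self_right, Nat.mul_add_mod_self_right, Nat.mod_eq_of_lt hk,
    Nat.mod_eq_of_lt hk'] at hmod
  rw [add_comm, Nat.add_mul_div_right _ _ he, add_comm (x * e), Nat.add_mul_div_right _ _ he,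
    Nat.div_eq_of_lt hk, Nat.div_eq_of_lt hk'] at hdiv
  obtain ⟨rfl, rfl⟩ : k' = k ∧ y = x := ⟨hmod, by omega⟩
  exact hy

lemma normalCount_runnerBeta {e k N : ℕ} {rows : ℕ → Finset ℕ} (hk : k < e)
    (hN : ∀ k' < e, ∀ y ∈ rows k', y < N) :
    normalCount e k (runnerBeta e rows) = rowsNormalCount N (rows k) (rows (k - 1)) := by
  have hB : ∀ b ∈ runnerBeta e rows, b < N * e := by
    intro b hb
    obtain ⟨k', hk', y, hy, rfl⟩ := mem_runnerBeta.mp hb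
    have := hN k' hk' y hy
    nlinarith
  have hsign : signAt e k (runnerBeta e rows) = rowSign (rows k) (rows (k - 1)) := by
    funext x
    simp only [signAt, rowSign, mul_add_mem_runnerBeta_iff hk,
      mul_add_mem_runnerBeta_iff (show k - 1 < e by omega)]
  rw [normalCount, signature_eq_filterMap_range (by omega) hB, hsign, rowsNormalCount]

lemma Ptn.parts_eq_zero_of_numParts_lt (l : Ptn) {i : ℕ} (h : l.numParts < i) : l.parts i = 0 :=
  Nat.sInf_mem (s := {N | ∀ j, N < j → l.parts j = 0})
    (by obtain ⟨N, hN⟩ := l.eventually_zero; exact ⟨N, fun j hj => hN j hj.le⟩) i h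

lemma Ptn.betaSet_succ (l : Ptn) {r : ℕ} (h : l.numParts ≤ r) :
    l.betaSet (r + 1) = addBead (l.betaSet r) := by
  have hIcc : Finset.Icc 1 (r + 1) = insert (r + 1) (Finset.Icc 1 r) := by
    ext x; simp only [Finset.mem_Icc, Finset.mem_insert]; omega
  simp only [Ptn.betaSet, addBead]
  rw [hIcc, Finset.image_insert, Finset.image_image, l.parts_eq_zero_of_numParts_lt (by omega)]
  congr 1
  · simp
  · refine Finset.image_congr fun x hx => ?_
    simp only [Finset.mem_coe, Finset.mem_Icc] at hx
    simp only [Function.comp]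
    omega

lemma addBead_runnerBeta {e : ℕ} (he : 0 < e) (rows : ℕ → Finset ℕ) :
    addBead (runnerBeta e rows) =
      runnerBeta e fun k => if k = 0 then addBead (rows (e - 1)) else rows (k - 1) := by
  ext m
  simp only [addBead, Finset.mem_insert, Finset.mem_image, mem_runnerBeta]
  constructor
  · rintro (rfl | ⟨b, ⟨k, hk, y, hy, rfl⟩, rfl⟩)
    · exact ⟨0, he, 0, by simp, by simp⟩
    · by_cases hke : k + 1 = e
      · refine ⟨0, he, y + 1, ?_, by rw [add_mul]; omega⟩
        simp only [if_pos, Finset.mem_insert, Finset.mem_image]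
        exact Or.inr ⟨y, by rwa [show e - 1 = k by omega], rfl⟩
      · exact ⟨k + 1, by omega, y, by simpa using hy, by omega⟩
  · rintro ⟨k, hk, y, hy, rfl⟩
    by_cases hk0 : k = 0
    · subst hk0
      simp only [if_pos, Finset.mem_insert, Finset.mem_image] at hy
      rcases hy with rfl | ⟨z, hz, rfl⟩
      · simp
      · exact Or.inr ⟨z * e + (e - 1), ⟨e - 1, by omega, z, hz, rfl⟩, by rw [add_mul]; omega⟩
    · rw [if_neg hk0] at hy
      exact Or.inr ⟨y * e + (k - 1), ⟨k - 1, by omega, y, hy, rfl⟩, by omega⟩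

lemma rowsNormalCount_le_one :
    ∀ R ∈ [rowsEmpty, rows1], ∀ R' ∈ [rowsEmpty, rows1, rows22, rows32],
      rowsNormalCount 10 R R' ≤ 1 ∧ rowsNormalCount 10 R (addBead R') ≤ 1 := by
  decide

lemma two_le_rowsNormalCount : ∀ R ∈ [rows22, rows32], 2 ≤ rowsNormalCount 10 R rowsEmpty := by
  decide

lemma lt_nine_of_mem_rows : ∀ R ∈ [rowsEmpty, rows1, rows22, rows32], ∀ y ∈ R, y < 9 := by
  decide

section OneBigRunner

variable {e i : ℕ} {rows : ℕ → Finset ℕ}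
  (hsmall : ∀ k ≠ i, rows k ∈ [rowsEmpty, rows1]) (hbig : rows i ∈ [rows22, rows32])
include hsmall hbig

lemma mem_rows_of_small_big (k : ℕ) : rows k ∈ [rowsEmpty, rows1, rows22, rows32] := by
  rcases eq_or_ne k i with rfl | hk
  · simp only [List.mem_cons, List.not_mem_nil, or_false] at hbig ⊢; tauto
  · have := hsmall k hk
    simp only [List.mem_cons, List.not_mem_nil, or_false] at this ⊢; tauto

lemma lt_nine_of_mem_rows_of_small_big (k : ℕ) : ∀ y ∈ rows k, y < 9 :=
  lt_nine_of_mem_rows _ (mem_rows_of_small_big hsmall hbig k)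

lemma two_le_normalCount_runnerBeta_iff (hprev : rows (i - 1) = rowsEmpty) {k : ℕ} (hk : k < e) :
    2 ≤ normalCount e k (runnerBeta e rows) ↔ k = i := by
  rw [normalCount_runnerBeta (N := 10) hk fun k' _ y hy =>
    (lt_nine_of_mem_rows_of_small_big hsmall hbig k' y hy).trans (by norm_num)]
  refine ⟨fun h => ?_, fun hki => ?_⟩
  · by_contra hki
    have := (rowsNormalCount_le_one _ (hsmall k hki) _
      (mem_rows_of_small_big hsmall hbig (k - 1))).1
    omega
  · subst hki
    rw [hprev]
    exact two_le_rowsNormalCount _ hbig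

lemma normalCount_one_addBead_runnerBeta_le_one (he : 2 ≤ e) (hi : i ≠ 0) :
    normalCount e 1 (addBead (runnerBeta e rows)) ≤ 1 := by
  have hlt := lt_nine_of_mem_rows_of_small_big hsmall hbig
  have hN : ∀ k < e, ∀ y ∈ (if k = 0 then addBead (rows (e - 1)) else rows (k - 1)), y < 10 := by
    intro k _ y hy
    split_ifs at hy
    · rcases Finset.mem_insert.mp hy with rfl | hy
      · norm_num
      · obtain ⟨z, hz, rfl⟩ := Finset.mem_image.mp hy
        have := hlt _ z hz
        omega
    · have := hlt _ y hy
      omega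
  rw [addBead_runnerBeta (by omega), normalCount_runnerBeta (by omega) hN]
  simpa using (rowsNormalCount_le_one _ (hsmall 0 hi.symm) _
    (mem_rows_of_small_big hsmall hbig (e - 1))).2

end OneBigRunner

theorem statement1_general (e : ℕ) (l : Ptn)
    (hparts : l.numParts ≤ 5 * e) (i : ℕ)
    (hshape :
      (1 ≤ i ∧ i ≤ e - 1 ∧ l.betaSet (5 * e) = shape32 e i) ∨
      (∃ j : ℕ, 1 ≤ i ∧ i < j ∧ j ≤ e - 1 ∧ l.betaSet (5 * e) = shapeA e i j) ∨
      (∃ j : ℕ, j + 2 ≤ i ∧ i ≤ e - 1 ∧ l.betaSet (5 * e) = shapeB e j i)) :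
    (∀ k : ℕ, 1 ≤ k → k ≤ e - 1 →
        (2 ≤ normalCount e k (l.betaSet (5 * e)) ↔ k = i)) ∧
      normalCount e 1 (l.betaSet (5 * e + 1)) ≤ 1 := by
  obtain ⟨rows, hβ, hi, hie, hsmall, hbig, hprev⟩ : ∃ rows : ℕ → Finset ℕ,
      l.betaSet (5 * e) = runnerBeta e rows ∧ 1 ≤ i ∧ i < e ∧
      (∀ k ≠ i, rows k ∈ [rowsEmpty, rows1]) ∧ rows i ∈ [rows22, rows32] ∧
      rows (i - 1) = rowsEmpty := by
    rcases hshape with ⟨hi, hie, hβ⟩ | ⟨j, hi, hij, hje, hβ⟩ | ⟨j, hji, hie, hβ⟩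
    · refine ⟨_, hβ, hi, by omega, fun k hk => by simp [hk], by simp, by simp; omega⟩
    · refine ⟨_, hβ, hi, by omega, fun k hk => ?_, by simp,
        by simp [show i - 1 ≠ i by omega, show i - 1 ≠ j by omega]⟩
      rcases eq_or_ne k j with rfl | hkj <;> simp [*]
    · refine ⟨_, hβ, by omega, by omega, fun k hk => ?_, by simp [show i ≠ j by omega],
        by simp [show i - 1 ≠ i by omega, show i - 1 ≠ j by omega]⟩
      rcases eq_or_ne k j with rfl | hkj <;> simp [*]
  refine ⟨fun k _ hk => ?_, ?_⟩
  · rw [hβ]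
    exact two_le_normalCount_runnerBeta_iff hsmall hbig hprev (by omega)
  · rw [l.betaSet_succ hparts, hβ]
    exact normalCount_one_addBead_runnerBeta_le_one hsmall hbig (by omega) (by omega)

/-- for `e ≥ 3` and `λ` of one of the forms `⟨i_{3,2}⟩`, `⟨i_{2²}, j⟩`,
`⟨j, i_{2²}⟩`, runner `i` is the unique runner `k ∈ {1,…,e-1}` whose reduced `k`-signature
(with `5e` beads) has at least two `−` signs, and with `5e+1` beads the reduced
`1`-signature has at most one `−` sign. -/
theorem statement1 (e : ℕ) (he : 3 ≤ e) (l : Ptn)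
    (hsize : l.size = 5 * e) (hparts : l.numParts ≤ 5 * e) (i : ℕ)
    (hshape :
      (1 ≤ i ∧ i ≤ e - 1 ∧ l.betaSet (5 * e) = shape32 e i) ∨
      (∃ j : ℕ, 1 ≤ i ∧ i < j ∧ j ≤ e - 1 ∧ l.betaSet (5 * e) = shapeA e i j) ∨
      (∃ j : ℕ, j + 2 ≤ i ∧ i ≤ e - 1 ∧ l.betaSet (5 * e) = shapeB e j i)) :
    (∀ k : ℕ, 1 ≤ k → k ≤ e - 1 →
        (2 ≤ normalCount e k (l.betaSet (5 * e)) ↔ k = i)) ∧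
      normalCount e 1 (l.betaSet (5 * e + 1)) ≤ 1 :=
  statement1_general e l hparts i hshape
end

section
/- Fix e ≥ 2 and suppose λ →^σ τ for partitions λ, σ, τ displayed on an abacus with a common number k of beads; that is, the display of σ is obtained from that of λ by moving a bead from a position a to the vacant position a − ie for some i ≥ 1, and the display of τ is obtained from that of σ by moving a bead from a position b − ie to the vacant position b, where a < b. Then λ and τ are partitions of the same integer n, they have the same e-core and the same e-weight, and τ strictly dominates λ in the dominance order. Consequently, the Jantzen order ≤_J is a partial order on partitions of n which is extended by the dominance order. -/
/-! A Jantzen move `λ →^σ τ` replaces the beads `a, b - ie` of `λ` by `a - ie, b`, with `a < b`.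
It keeps each bead on its runner, so the `e`-core, and the sum of the bead positions, hence the
size and the `e`-weight, are preserved. The pair `a - ie < b` is more spread out than `a, b - ie`,
so for every threshold `x` the truncated sum `∑ (p - x)` over the beads does not decrease; taking
`x` to be the `t`-th largest bead of `τ` turns this into `λ₁ + ⋯ + λₜ ≤ τ₁ + ⋯ + τₜ`. Hence `≤_J`
is contained in dominance, which is antisymmetric. -/

open Finset

namespace Ptn

variable (l : Ptn)

theorem ext {l m : Ptn} (h : l.parts = m.parts) : l = m := by
  cases l; cases m; cases h; rfl

theorem parts_eq_zero {i : ℕ} (hi : l.numParts < i) : l.parts i = 0 := by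
  obtain ⟨N, hN⟩ := l.eventually_zero
  exact Nat.sInf_mem (s := {N : ℕ | ∀ i : ℕ, N < i → l.parts i = 0})
    ⟨N, fun i hi => hN i hi.le⟩ i hi

theorem size_eq_sum_Icc {r : ℕ} (h : l.numParts ≤ r) :
    l.size = ∑ i ∈ Icc 1 r, l.parts i := by
  refine sum_subset (Icc_subset_Icc_right h) fun i hi hni => ?_
  simp only [mem_Icc] at hi hni
  exact l.parts_eq_zero (by omega)

theorem beta_strictAntiOn (r : ℕ) : StrictAntiOn (fun i => l.parts i + r - i) (Icc 1 r) := by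
  intro i hi j hj hij
  simp only [coe_Icc, Set.mem_Icc] at hi hj
  have := l.antitone hi.1 hij.le
  dsimp only
  omega

theorem sum_betaSet (r : ℕ) (g : ℕ → ℕ) :
    ∑ p ∈ l.betaSet r, g p = ∑ i ∈ Icc 1 r, g (l.parts i + r - i) :=
  sum_image (l.beta_strictAntiOn r).injOn

theorem sum_Icc_beta {r t : ℕ} (ht : t ≤ r) :
    ∑ i ∈ Icc 1 t, (l.parts i + r - i) = ∑ i ∈ Icc 1 t, l.parts i + ∑ i ∈ Icc 1 t, (r - i) := by
  rw [← sum_add_distrib]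
  refine sum_congr rfl fun i hi => ?_
  simp only [mem_Icc] at hi
  omega

theorem sum_betaSet_id {r : ℕ} (h : l.numParts ≤ r) :
    ∑ p ∈ l.betaSet r, p = l.size + ∑ i ∈ Icc 1 r, (r - i) := by
  rw [l.size_eq_sum_Icc h, ← l.sum_Icc_beta le_rfl]
  exact l.sum_betaSet r id

theorem betaSet_succ_s4 {r : ℕ} (h : l.numParts ≤ r) :
    l.betaSet (r + 1) = insert 0 ((l.betaSet r).image (· + 1)) := by
  ext x
  simp only [betaSet, mem_insert, mem_image, mem_Icc]
  constructor
  · rintro ⟨i, ⟨h1, h2⟩, rfl⟩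
    rcases Nat.lt_or_ge i (r + 1) with hlt | hge
    · exact Or.inr ⟨l.parts i + r - i, ⟨i, ⟨h1, by omega⟩, rfl⟩, by omega⟩
    · obtain rfl : i = r + 1 := by omega
      rw [l.parts_eq_zero (by omega)]
      omega
  · rintro (rfl | ⟨y, ⟨i, ⟨h1, h2⟩, rfl⟩, rfl⟩)
    · exact ⟨r + 1, ⟨by omega, le_rfl⟩, by rw [l.parts_eq_zero (by omega)]; omega⟩
    · exact ⟨i, ⟨h1, by omega⟩, by omega⟩

end Ptn

theorem sum_Icc_le_sum_tsub_add (f : ℕ → ℕ) {t k : ℕ} (htk : t ≤ k) (x : ℕ) :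
    ∑ i ∈ Icc 1 t, f i ≤ ∑ i ∈ Icc 1 k, (f i - x) + t * x :=
  calc ∑ i ∈ Icc 1 t, f i
      ≤ ∑ i ∈ Icc 1 t, ((f i - x) + x) := sum_le_sum fun i _ => by omega
    _ = ∑ i ∈ Icc 1 t, (f i - x) + t * x := by simp [sum_add_distrib]
    _ ≤ ∑ i ∈ Icc 1 k, (f i - x) + t * x := by gcongr

theorem sum_Icc_tsub_add_eq {f : ℕ → ℕ} {t k : ℕ} (hf : AntitoneOn f (Icc 1 k))
    (ht : 1 ≤ t) (htk : t ≤ k) :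
    ∑ i ∈ Icc 1 k, (f i - f t) + t * f t = ∑ i ∈ Icc 1 t, f i := by
  have htail : ∑ i ∈ Icc 1 k, (f i - f t) = ∑ i ∈ Icc 1 t, (f i - f t) := by
    refine (sum_subset (Icc_subset_Icc_right htk) fun i hi hni => ?_).symm
    simp only [mem_Icc] at hi hni
    have := hf (by simp [ht, htk]) (by simpa using hi) (show t ≤ i by omega)
    omega
  have hhead : ∀ i ∈ Icc 1 t, f i - f t + f t = f i := by
    intro i hi
    simp only [mem_Icc] at hi
    have := hf (by simpa using ⟨hi.1, hi.2.trans htk⟩) (by simp [ht, htk]) hi.2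
    omega
  rw [htail, ← sum_congr rfl hhead, sum_add_distrib, sum_const, Nat.card_Icc, smul_eq_mul,
    Nat.add_sub_cancel]

theorem Dom.refl (l : Ptn) : Dom l l := fun _ => le_rfl

theorem Dom.trans {l m ν : Ptn} (h₁ : Dom l m) (h₂ : Dom m ν) : Dom l ν :=
  fun t => (h₁ t).trans (h₂ t)

theorem Dom.antisymm {l m : Ptn} (h₁ : Dom l m) (h₂ : Dom m l) : l = m := by
  have hsum : ∀ t, ∑ i ∈ Icc 1 t, l.parts i = ∑ i ∈ Icc 1 t, m.parts i :=
    fun t => le_antisymm (h₁ t) (h₂ t)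
  refine Ptn.ext (funext fun i => ?_)
  cases i with
  | zero => rw [l.zero_at_zero, m.zero_at_zero]
  | succ j =>
    have h := hsum (j + 1)
    rw [sum_Icc_succ_top (by omega), sum_Icc_succ_top (by omega), hsum j] at h
    omega

theorem Dom.of_sum_tsub_le {l τ : Ptn} {k : ℕ} (hl : l.numParts ≤ k) (hτ : τ.numParts ≤ k)
    (hsize : l.size = τ.size)
    (h : ∀ x, ∑ p ∈ l.betaSet k, (p - x) ≤ ∑ p ∈ τ.betaSet k, (p - x)) : Dom l τ := by
  intro t
  rcases Nat.eq_zero_or_pos t with rfl | ht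
  · simp
  rcases le_or_gt t k with htk | htk
  · set x := τ.parts t + k - t
    have key : ∑ i ∈ Icc 1 t, (l.parts i + k - i) ≤ ∑ i ∈ Icc 1 t, (τ.parts i + k - i) :=
      calc ∑ i ∈ Icc 1 t, (l.parts i + k - i)
          ≤ ∑ p ∈ l.betaSet k, (p - x) + t * x := by
            rw [l.sum_betaSet k]
            exact sum_Icc_le_sum_tsub_add _ htk x
        _ ≤ ∑ p ∈ τ.betaSet k, (p - x) + t * x := Nat.add_le_add_right (h x) _
        _ = ∑ i ∈ Icc 1 t, (τ.parts i + k - i) := by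
            rw [τ.sum_betaSet k]
            exact sum_Icc_tsub_add_eq (τ.beta_strictAntiOn k).antitoneOn ht htk
    rw [l.sum_Icc_beta htk, τ.sum_Icc_beta htk] at key
    omega
  · rw [← l.size_eq_sum_Icc (by omega), ← τ.size_eq_sum_Icc (by omega), hsize]

/-- The runners of the beads of `B`, as a multiset of residues modulo `e`. -/
def residues (e : ℕ) (B : Finset ℕ) : Multiset (ZMod e) := B.val.map (↑)

theorem card_filter_mod_eq_count_residues {e j : ℕ} (hj : j < e) (B : Finset ℕ) :
    (B.filter fun x => x % e = j).card = (residues e B).count (j : ZMod e) := by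
  rw [residues, Multiset.count_map, card_def, filter_val]
  congr 1
  refine Multiset.filter_congr fun x _ => ?_
  rw [ZMod.natCast_eq_natCast_iff', Nat.mod_eq_of_lt hj, eq_comm]

theorem coreBeta_eq_of_residues_eq {e : ℕ} {B B' : Finset ℕ}
    (h : residues e B = residues e B') : coreBeta e B = coreBeta e B' := by
  refine biUnion_congr rfl fun j hj => ?_
  rw [mem_range] at hj
  rw [card_filter_mod_eq_count_residues hj, card_filter_mod_eq_count_residues hj, h]

theorem Ptn.residues_betaSet_succ (e : ℕ) (l : Ptn) {r : ℕ} (h : l.numParts ≤ r) :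
    residues e (l.betaSet (r + 1)) = 0 ::ₘ (residues e (l.betaSet r)).map (· + 1) := by
  rw [residues, l.betaSet_succ_s4 h, insert_val_of_notMem (by simp),
    image_val_of_injOn (add_left_injective 1).injOn, residues]
  simp [Multiset.map_map]

theorem Ptn.residues_betaSet_eq_iff (e : ℕ) {l m : Ptn} {r s : ℕ} (hl : l.numParts ≤ r)
    (hm : m.numParts ≤ r) (hrs : r ≤ s) :
    residues e (l.betaSet s) = residues e (m.betaSet s) ↔
      residues e (l.betaSet r) = residues e (m.betaSet r) := by
  induction s, hrs using Nat.le_induction with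
  | base => rfl
  | succ s hrs ih =>
    rw [l.residues_betaSet_succ e (hl.trans hrs), m.residues_betaSet_succ e (hm.trans hrs),
      Multiset.cons_inj_right, (Multiset.map_injective (add_left_injective 1)).eq_iff, ih]

theorem SameCore.of_residues_eq {e k : ℕ} {l m : Ptn} (hl : l.numParts ≤ k)
    (hm : m.numParts ≤ k) (h : residues e (l.betaSet k) = residues e (m.betaSet k)) :
    SameCore e l m := by
  intro r hlr hmr
  apply coreBeta_eq_of_residues_eq
  have hl₀ := le_max_left l.numParts m.numParts
  have hm₀ := le_max_right l.numParts m.numParts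
  rw [Ptn.residues_betaSet_eq_iff e hl₀ hm₀ (max_le hlr hmr)]
  exact (Ptn.residues_betaSet_eq_iff e hl₀ hm₀ (max_le hl hm)).mp h

theorem Finset.val_insert_erase_add {B : Finset ℕ} {a y : ℕ} (ha : a ∈ B) (hy : y ∉ B) :
    (insert y (B.erase a)).val + {a} = B.val + {y} := by
  rw [insert_val_of_notMem fun h => hy (mem_of_mem_erase h), erase_val]
  conv_rhs => rw [← Multiset.cons_erase ha]
  rw [Multiset.cons_add, Multiset.cons_add, ← Multiset.cons_zero, ← Multiset.cons_zero,
    Multiset.add_cons, Multiset.add_cons, Multiset.cons_swap]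

theorem Finset.sum_add_add_eq_of_val_eq {M : Type*} [AddCommMonoid M] {B C : Finset ℕ}
    {x y z w : ℕ} (h : B.val + {x} + {y} = C.val + {z} + {w}) (g : ℕ → M) :
    ∑ p ∈ B, g p + g x + g y = ∑ p ∈ C, g p + g z + g w := by
  have := congrArg (fun s => (s.map g).sum) h
  simp only [Multiset.map_add, Multiset.sum_add, Multiset.map_singleton,
    Multiset.sum_singleton] at this
  simpa only [sum_eq_multiset_sum] using this

namespace JStep

variable {e k : ℕ} {l τ : Ptn}

theorem exists_val_add_eq (h : JStep e k l τ) :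
    ∃ a b d : ℕ, a < b ∧ d ≤ a ∧ e ∣ d ∧ a ∈ l.betaSet k ∧ a - d ∉ l.betaSet k ∧
    (τ.betaSet k).val + {b - d} + {a} = (l.betaSet k).val + {a - d} + {b} := by
  obtain ⟨-, -, σ, a, b, i, -, hab, ha, hia, hna, rfl, -, hσb, hbσ, hτ⟩ := h
  refine ⟨a, b, i * e, hab, hia, dvd_mul_left e i, ha, hna, ?_⟩
  rw [hτ, Finset.val_insert_erase_add hσb hbσ, add_right_comm,
    Finset.val_insert_erase_add ha hna]

theorem sum_eq (h : JStep e k l τ) : ∑ p ∈ τ.betaSet k, p = ∑ p ∈ l.betaSet k, p := by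
  obtain ⟨a, b, d, hab, hda, -, -, -, hval⟩ := h.exists_val_add_eq
  have := Finset.sum_add_add_eq_of_val_eq hval id
  simp only [id] at this
  omega

theorem size_eq (h : JStep e k l τ) : l.size = τ.size := by
  have := h.sum_eq
  rw [l.sum_betaSet_id h.1, τ.sum_betaSet_id h.2.1] at this
  omega

theorem residues_eq (h : JStep e k l τ) :
    residues e (τ.betaSet k) = residues e (l.betaSet k) := by
  obtain ⟨a, b, d, hab, hda, hed, -, -, hval⟩ := h.exists_val_add_eq
  have hcast : ∀ x, d ≤ x → ((x - d : ℕ) : ZMod e) = x := fun x hx => by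
    rw [Nat.cast_sub hx, (ZMod.natCast_eq_zero_iff d e).mpr hed, sub_zero]
  have hmap := congrArg (Multiset.map (Nat.cast : ℕ → ZMod e)) hval
  simp only [Multiset.map_add, Multiset.map_singleton, hcast a hda, hcast b (by omega)] at hmap
  rw [add_right_comm] at hmap
  exact add_right_cancel (add_right_cancel hmap)

theorem sameCore (h : JStep e k l τ) : SameCore e l τ :=
  SameCore.of_residues_eq h.1 h.2.1 h.residues_eq.symm

theorem eWeight_eq (h : JStep e k l τ) : eWeight e (l.betaSet k) = eWeight e (τ.betaSet k) := by
  rw [eWeight, eWeight, h.sum_eq, coreBeta_eq_of_residues_eq h.residues_eq]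

theorem sum_tsub_le (h : JStep e k l τ) (x : ℕ) :
    ∑ p ∈ l.betaSet k, (p - x) ≤ ∑ p ∈ τ.betaSet k, (p - x) := by
  obtain ⟨a, b, d, hab, hda, -, -, -, hval⟩ := h.exists_val_add_eq
  have := Finset.sum_add_add_eq_of_val_eq hval (· - x)
  omega

theorem dom (h : JStep e k l τ) : Dom l τ :=
  Dom.of_sum_tsub_le h.1 h.2.1 h.size_eq h.sum_tsub_le

theorem ne (h : JStep e k l τ) : l ≠ τ := by
  rintro rfl
  obtain ⟨a, b, d, hab, -, -, ha, hna, hval⟩ := h.exists_val_add_eq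
  rw [add_assoc, add_assoc, add_right_inj] at hval
  have hmem : a ∈ ({a - d} + {b} : Multiset ℕ) := hval ▸ by simp
  rcases Multiset.mem_add.mp hmem with had | hab'
  · exact hna (Multiset.mem_singleton.mp had ▸ ha)
  · exact hab.ne (Multiset.mem_singleton.mp hab')

end JStep

theorem JLE.dom {e : ℕ} {l m : Ptn} (h : JLE e l m) : Dom l m := by
  induction h with
  | refl => exact Dom.refl l
  | tail _ hstep ih =>
    obtain ⟨k, hk⟩ := hstep
    exact ih.trans hk.dom

theorem statement4_general (e : ℕ) (n : ℕ) :
    (∀ (k : ℕ) (l τ : Ptn), JStep e k l τ →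
        l.size = τ.size ∧ SameCore e l τ ∧
        eWeight e (l.betaSet k) = eWeight e (τ.betaSet k) ∧
        Dom l τ ∧ l ≠ τ) ∧
    (∀ l m : Ptn, l.size = n → m.size = n → JLE e l m → JLE e m l → l = m) ∧
    (∀ l m : Ptn, l.size = n → m.size = n → JLE e l m → Dom l m) :=
  ⟨fun _ _ _ h => ⟨h.size_eq, h.sameCore, h.eWeight_eq, h.dom, h.ne⟩,
    fun _ _ _ _ h₁ h₂ => h₁.dom.antisymm h₂.dom,
    fun _ _ _ _ h => h.dom⟩

/-- if `λ →^σ τ` then `λ` and `τ` are partitions of the same integer with the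
same `e`-core and `e`-weight, and `τ` strictly dominates `λ`; consequently the Jantzen
order is a partial order on partitions of `n` extended by the dominance order. -/
theorem statement4 (e : ℕ) (he : 2 ≤ e) (n : ℕ) :
    (∀ (k : ℕ) (l τ : Ptn), JStep e k l τ →
        l.size = τ.size ∧ SameCore e l τ ∧
        eWeight e (l.betaSet k) = eWeight e (τ.betaSet k) ∧
        Dom l τ ∧ l ≠ τ) ∧
    (∀ l m : Ptn, l.size = n → m.size = n → JLE e l m → JLE e m l → l = m) ∧
    (∀ l m : Ptn, l.size = n → m.size = n → JLE e l m → Dom l m) :=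
  statement4_general e n
end
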